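/- Let n ≥ 5. Every nontrivial weakly connected spanning closed subgraph G of the directed square cycle C_n² equals the directed strip graph with tails S_{n,k,j} for some integers j, k with 0 ≤ j ≤ n−1 and 0 ≤ k ≤ ⌈(n−2)/2⌉. -/
import Mathlib


open Relation Finset

def jacobsthal : ℕ → ℕ
  | 0 => 0
  | 1 => 1
  | n + 2 => jacobsthal (n + 1) + 2 * jacobsthal n

/-- The symmetric (underlying undirected) reachability of a directed edge set is total. -/
def weaklyConnected {V : Type*} (E : Set (V × V)) : Prop :=
  ∀ u v : V, Relation.ReflTransGen (fun a b => (a, b) ∈ E ∨ (b, a) ∈ E) u v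

/-- One directed step along an edge set. -/
def dstep {V : Type*} (E : Set (V × V)) (a b : V) : Prop := (a, b) ∈ E

/-- Directed spanning tree of the digraph with edge set `Amb`, rooted at `u`. -/
def IsDirSpanningTree {V : Type*} (Amb : Set (V × V)) (u : V) (E : Set (V × V)) : Prop :=
  E ⊆ Amb ∧ weaklyConnected E ∧
    (∀ v : V, ¬ Relation.TransGen (dstep E) v v) ∧
    (∀ v : V, v ≠ u → ∃! w : V, (w, v) ∈ E) ∧
    (∀ v : V, v ≠ u → Relation.ReflTransGen (dstep E) u v)

/-- Directed strip graph on `m` vertices (vertex `i+1` of the paper is `i : Fin m`). -/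
def stripEdges (m : ℕ) : Set (Fin m × Fin m) :=
  {p | p.2.val = p.1.val + 1 ∨ p.2.val = p.1.val + 2}

/-- Directed spanning tree of the strip graph rooted at its first vertex. -/
def IsStripTree (m : ℕ) (E : Set (Fin m × Fin m)) : Prop :=
  E ⊆ stripEdges m ∧ weaklyConnected E ∧
    (∀ v, ¬ Relation.TransGen (dstep E) v v) ∧
    (∀ v : Fin m, v.val ≠ 0 → ∃! w : Fin m, (w, v) ∈ E) ∧
    (∀ v : Fin m, v.val ≠ 0 → ∃ u : Fin m, u.val = 0 ∧ Relation.ReflTransGen (dstep E) u v)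

/-- `t(S_m, 1)`: number of directed spanning trees of the strip graph rooted at vertex 1. -/
noncomputable def tStrip (m : ℕ) : ℕ := Set.ncard {E : Set (Fin m × Fin m) | IsStripTree m E}

def frame (n : ℕ) (i : ℤ) : ZMod n × ZMod n := ((i : ZMod n), ((i + 1 : ℤ) : ZMod n))

def window (n : ℕ) (i : ℤ) : ZMod n × ZMod n := ((i : ZMod n), ((i + 2 : ℤ) : ZMod n))

/-- Edge set of the directed square cycle. -/
def sqCycleEdges (n : ℕ) : Set (ZMod n × ZMod n) :=
  {p | ∃ i : ℤ, p = frame n i ∨ p = window n i}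

def windowsSet (n : ℕ) : Set (ZMod n × ZMod n) := {p | ∃ i : ℤ, p = window n i}

def triangleEdges (n : ℕ) (i : ℤ) : Set (ZMod n × ZMod n) :=
  {frame n i, frame n (i + 1), window n i}

def IsClosedSub (n : ℕ) (E : Set (ZMod n × ZMod n)) : Prop :=
  ∀ i : ℤ, (triangleEdges n i ∩ E).Subsingleton ∨ triangleEdges n i ⊆ E

/-- Weakly connected spanning closed subgraph of the square cycle. -/
def IsWCSC (n : ℕ) (E : Set (ZMod n × ZMod n)) : Prop :=
  E ⊆ sqCycleEdges n ∧ weaklyConnected E ∧ IsClosedSub n E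

/-- A spanning subgraph is nontrivial if it is neither the whole square cycle
nor the all-windows subgraph. -/
def NontrivialSub (n : ℕ) (E : Set (ZMod n × ZMod n)) : Prop :=
  E ≠ sqCycleEdges n ∧ E ≠ windowsSet n

def escapeRoute (n : ℕ) (k j : ℤ) : Set (ZMod n × ZMod n) :=
  {window n (j - 2), window n (j + 2 * k - 1)} ∪
    {p | ∃ i : ℤ, j - 1 ≤ i ∧ i ≤ j + 2 * k - 1 ∧ p = frame n i}

/-- Edge set of the directed strip graph with tails `S_{n,k,j}`. -/
def stripTailEdges (n : ℕ) (k j : ℤ) : Set (ZMod n × ZMod n) :=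
  sqCycleEdges n \ escapeRoute n k j

section AuxWCSC

variable {n : ℕ}

lemma castZ_eq_iff {m m' : ℤ} : ((m : ZMod n) = (m' : ZMod n)) ↔ (n:ℤ) ∣ m' - m := by
  rw [ZMod.intCast_eq_intCast_iff]
  exact ⟨fun h => h.dvd, fun h => Int.modEq_iff_dvd.2 h⟩

lemma castZ_of_dvd {m m' : ℤ} (h : (n:ℤ) ∣ m' - m) : ((m : ZMod n) = (m' : ZMod n)) :=
  castZ_eq_iff.2 h

lemma dvd_small {N d : ℤ} (h : N ∣ d) (h1 : -N < d) (h2 : d < N) : d = 0 := by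
  by_contra hd
  have h3 : N ∣ |d| := (dvd_abs N d).mpr h
  have := Int.le_of_dvd (abs_pos.mpr hd) h3
  rcases abs_cases d with ⟨he, _⟩ | ⟨he, _⟩ <;> omega

lemma odd_dvd_two_mul {N v : ℤ} (hodd : ¬ (2:ℤ) ∣ N) (h : N ∣ 2*v) : N ∣ v := by
  obtain ⟨q, hq⟩ := h
  have he : Even (N*q) := ⟨v, by linarith⟩
  rw [Int.even_mul] at he
  rcases he with h1 | h2
  · exact absurd h1.two_dvd hodd
  · obtain ⟨q', rfl⟩ := h2
    exact ⟨q', by linarith⟩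

lemma frame_congr {m i : ℤ} (h : (m : ZMod n) = (i : ZMod n)) : frame n m = frame n i := by
  unfold frame
  have h2 : ((m + 1 : ℤ) : ZMod n) = ((i + 1 : ℤ) : ZMod n) := by
    push_cast; rw [h]
  rw [h, h2]

lemma window_congr {m i : ℤ} (h : (m : ZMod n) = (i : ZMod n)) : window n m = window n i := by
  unfold window
  have h2 : ((m + 2 : ℤ) : ZMod n) = ((i + 2 : ℤ) : ZMod n) := by
    push_cast; rw [h]
  rw [h, h2]

lemma exists_rep (hn : 0 < n) (c i : ℤ) :
    ∃ m : ℤ, c ≤ m ∧ m < c + n ∧ (m : ZMod n) = (i : ZMod n) := by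
  refine ⟨c + (i - c) % n, le_add_of_nonneg_right (Int.emod_nonneg _ (by positivity)), ?_, ?_⟩
  · have := Int.emod_lt_of_pos (i - c) (show (0:ℤ) < n by exact_mod_cast hn)
    omega
  · apply castZ_of_dvd
    have : (n:ℤ) ∣ (i - c) - (i - c) % n := Int.dvd_self_sub_of_emod_eq rfl
    have h2 : i - (c + (i - c) % n) = (i - c) - (i - c) % n := by ring
    rw [h2]; exact this

lemma rep_unique (hn : 0 < n) {m m' : ℤ} (h : (m : ZMod n) = (m' : ZMod n))
    (h1 : -(n:ℤ) < m' - m) (h2 : m' - m < n) : m = m' := by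
  have := dvd_small (castZ_eq_iff.1 h) h1 h2
  omega

lemma one_ne_zero_zmod (hn : 5 ≤ n) : (1 : ZMod n) ≠ 0 := by
  intro h
  have h2 : ((1:ℕ) : ZMod n) = 0 := by exact_mod_cast h
  rw [ZMod.natCast_eq_zero_iff] at h2
  have := Nat.le_of_dvd one_pos h2
  omega

end AuxWCSC
section AuxWCSC2

variable {n : ℕ}

lemma frame_eq_frame {i i' : ℤ} (h : frame n i = frame n i') : (i : ZMod n) = (i' : ZMod n) :=
  congrArg Prod.fst h

lemma window_eq_window {i i' : ℤ} (h : window n i = window n i') : (i : ZMod n) = (i' : ZMod n) :=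
  congrArg Prod.fst h

lemma frame_ne_window (hn : 5 ≤ n) (i i' : ℤ) : frame n i ≠ window n i' := by
  intro h
  have h1 : (i : ZMod n) = (i' : ZMod n) := congrArg Prod.fst h
  have h2 : ((i+1 : ℤ) : ZMod n) = ((i'+2 : ℤ) : ZMod n) := congrArg Prod.snd h
  have h3 : (n:ℤ) ∣ (i'+2) - (i+1) := castZ_eq_iff.1 h2
  have h4 : (n:ℤ) ∣ i' - i := castZ_eq_iff.1 h1
  have h5 : (n:ℤ) ∣ 1 := by
    have h6 := dvd_sub h3 h4
    have h7 : ((i'+2) - (i+1)) - (i' - i) = 1 := by ring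
    rwa [h7] at h6
  have := Int.le_of_dvd one_pos h5
  omega

lemma frame_ne_frame_succ (hn : 5 ≤ n) (i : ℤ) : frame n i ≠ frame n (i+1) := by
  intro h
  have h1 := castZ_eq_iff.1 (frame_eq_frame h)
  have h2 : (i+1) - i = 1 := by ring
  rw [h2] at h1
  have := Int.le_of_dvd one_pos h1
  omega

variable {E : Set (ZMod n × ZMod n)}

/-- closure: two frames force a window -/
lemma closure_w (hn : 5 ≤ n) (hcl : IsClosedSub n E) {i : ℤ}
    (h1 : frame n i ∈ E) (h2 : frame n (i+1) ∈ E) : window n i ∈ E := by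
  rcases hcl i with hs | hsub
  · exfalso
    apply frame_ne_frame_succ hn i
    exact hs ⟨Set.mem_insert _ _, h1⟩ ⟨Set.mem_insert_of_mem _ (Set.mem_insert _ _), h2⟩
  · exact hsub (Set.mem_insert_of_mem _ (Set.mem_insert_of_mem _ rfl))

lemma closure_f1 (hn : 5 ≤ n) (hcl : IsClosedSub n E) {i : ℤ}
    (h1 : window n i ∈ E) (h2 : frame n i ∈ E) : frame n (i+1) ∈ E := by
  rcases hcl i with hs | hsub
  · exfalso
    apply frame_ne_window hn i i
    exact hs ⟨Set.mem_insert _ _, h2⟩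
      ⟨Set.mem_insert_of_mem _ (Set.mem_insert_of_mem _ rfl), h1⟩
  · exact hsub (Set.mem_insert_of_mem _ (Set.mem_insert _ _))

lemma closure_f2 (hn : 5 ≤ n) (hcl : IsClosedSub n E) {i : ℤ}
    (h1 : window n i ∈ E) (h2 : frame n (i+1) ∈ E) : frame n i ∈ E := by
  rcases hcl i with hs | hsub
  · exfalso
    apply frame_ne_window hn (i+1) i
    exact hs ⟨Set.mem_insert_of_mem _ (Set.mem_insert _ _), h2⟩
      ⟨Set.mem_insert_of_mem _ (Set.mem_insert_of_mem _ rfl), h1⟩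
  · exact hsub (Set.mem_insert _ _)

/-- boundary windows are absent -/
lemma boundary_left (hn : 5 ≤ n) (hcl : IsClosedSub n E) {a : ℤ}
    (h1 : frame n (a-1) ∈ E) (h2 : frame n a ∉ E) : window n (a-1) ∉ E := by
  intro hw
  have := closure_f1 hn hcl hw h1
  have h3 : a - 1 + 1 = a := by ring
  rw [h3] at this
  exact h2 this

lemma boundary_right (hn : 5 ≤ n) (hcl : IsClosedSub n E) {b : ℤ}
    (h1 : frame n (b+1) ∈ E) (h2 : frame n b ∉ E) : window n b ∉ E := by
  intro hw
  exact h2 (closure_f2 hn hcl hw h1)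

lemma exists_crossing {V : Type*} {E : Set (V × V)} {S : Set V} {u v : V}
    (h : Relation.ReflTransGen (fun a b => (a, b) ∈ E ∨ (b, a) ∈ E) u v)
    (hu : u ∈ S) (hv : v ∉ S) :
    ∃ a b, a ∈ S ∧ b ∉ S ∧ ((a, b) ∈ E ∨ (b, a) ∈ E) := by
  induction h using Relation.ReflTransGen.head_induction_on with
  | refl => exact absurd hu hv
  | head hac _ ih =>
    rename_i x c _
    by_cases hc : c ∈ S
    · exact ih hc
    · exact ⟨x, c, hu, hc, hac⟩

lemma noCross (hsub : E ⊆ sqCycleEdges n) (hconn : weaklyConnected E)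
    (S : Set (ZMod n))
    (hstep : ∀ i : ℤ,
      (frame n i ∈ E → (((i : ZMod n) ∈ S) ↔ (((i+1 : ℤ) : ZMod n) ∈ S))) ∧
      (window n i ∈ E → (((i : ZMod n) ∈ S) ↔ (((i+2 : ℤ) : ZMod n) ∈ S))))
    {u v : ZMod n} (hu : u ∈ S) (hv : v ∉ S) : False := by
  obtain ⟨x, y, hx, hy, hxy⟩ := exists_crossing (hconn u v) hu hv
  rcases hxy with hmem | hmem
  · obtain ⟨i, hi | hi⟩ := hsub hmem
    · rw [hi] at hmem
      have := ((hstep i).1 hmem)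
      rw [show frame n i = ((i : ZMod n), ((i+1:ℤ) : ZMod n)) from rfl] at hi
      have hx' : x = (i : ZMod n) := congrArg Prod.fst hi
      have hy' : y = ((i+1:ℤ) : ZMod n) := congrArg Prod.snd hi
      rw [hx'] at hx; rw [hy'] at hy
      exact hy (this.1 hx)
    · rw [hi] at hmem
      have := ((hstep i).2 hmem)
      have hx' : x = (i : ZMod n) := congrArg Prod.fst hi
      have hy' : y = ((i+2:ℤ) : ZMod n) := congrArg Prod.snd hi
      rw [hx'] at hx; rw [hy'] at hy
      exact hy (this.1 hx)
  · obtain ⟨i, hi | hi⟩ := hsub hmem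
    · rw [hi] at hmem
      have := ((hstep i).1 hmem)
      have hy' : y = (i : ZMod n) := congrArg Prod.fst hi
      have hx' : x = ((i+1:ℤ) : ZMod n) := congrArg Prod.snd hi
      rw [hx'] at hx; rw [hy'] at hy
      exact hy (this.2 hx)
    · rw [hi] at hmem
      have := ((hstep i).2 hmem)
      have hy' : y = (i : ZMod n) := congrArg Prod.fst hi
      have hx' : x = ((i+2:ℤ) : ZMod n) := congrArg Prod.snd hi
      rw [hx'] at hx; rw [hy'] at hy
      exact hy (this.2 hx)

end AuxWCSC2
section AuxWCSC3

variable {n : ℕ} {E : Set (ZMod n × ZMod n)}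

lemma cutWindow (hn : 5 ≤ n) (hsub : E ⊆ sqCycleEdges n) (hconn : weaklyConnected E)
    (c : ℤ) (T : ℤ → Prop)
    (hE1 : ∀ m, c ≤ m → m + 1 ≤ c + n - 1 → frame n m ∈ E → (T m ↔ T (m+1)))
    (hE2 : frame n (c+n-1) ∈ E → (T (c+n-1) ↔ T c))
    (hW1 : ∀ m, c ≤ m → m + 2 ≤ c + n - 1 → window n m ∈ E → (T m ↔ T (m+2)))
    (hW2 : window n (c+n-2) ∈ E → (T (c+n-2) ↔ T c))
    (hW3 : window n (c+n-1) ∈ E → (T (c+n-1) ↔ T (c+1)))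
    (m1 : ℤ) (hm1 : c ≤ m1 ∧ m1 < c+n ∧ T m1)
    (m2 : ℤ) (hm2 : c ≤ m2 ∧ m2 < c+n ∧ ¬ T m2) : False := by
  have hn0 : 0 < n := by omega
  set S : Set (ZMod n) := {x | ∃ m', c ≤ m' ∧ m' < c + n ∧ (m' : ZMod n) = x ∧ T m'} with hS
  have memS : ∀ (m : ℤ), c ≤ m → m < c + n → (((m : ZMod n) ∈ S) ↔ T m) := by
    intro m h1 h2
    constructor
    · rintro ⟨m', h1', h2', hc', hT'⟩
      have : m' = m := rep_unique hn0 hc' (by omega) (by omega)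
      rwa [this] at hT'
    · intro hT
      exact ⟨m, h1, h2, rfl, hT⟩
  apply noCross hsub hconn S ?_ ((memS m1 hm1.1 hm1.2.1).2 hm1.2.2)
    (fun h => hm2.2.2 ((memS m2 hm2.1 hm2.2.1).1 h))
  intro i
  obtain ⟨m, h1, h2, hcast⟩ := exists_rep hn0 c i
  have hiS : ((i : ZMod n) ∈ S) ↔ T m := by rw [← hcast]; exact memS m h1 h2
  constructor
  · intro hF
    have hFm : frame n m ∈ E := by rwa [frame_congr hcast]
    by_cases hm : m + 1 ≤ c + n - 1
    · have hc1 : ((m+1 : ℤ) : ZMod n) = ((i+1 : ℤ) : ZMod n) := by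
        push_cast; rw [hcast]
      have hS1 : (((i+1:ℤ) : ZMod n) ∈ S) ↔ T (m+1) := by
        rw [← hc1]; exact memS (m+1) (by omega) (by omega)
      rw [hiS, hS1]
      exact hE1 m h1 hm hFm
    · have hm' : m = c + n - 1 := by omega
      have hc1 : ((c : ℤ) : ZMod n) = ((i+1 : ℤ) : ZMod n) := by
        apply castZ_of_dvd
        have hd : (n:ℤ) ∣ i - m := castZ_eq_iff.1 hcast
        have : (i + 1) - c = (i - m) + n := by rw [hm']; ring
        rw [this]
        exact dvd_add hd ⟨1, by ring⟩
      have hS1 : (((i+1:ℤ) : ZMod n) ∈ S) ↔ T c := by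
        rw [← hc1]; exact memS c (by omega) (by omega)
      rw [hiS, hS1, hm']
      exact hE2 (by rwa [hm'] at hFm)
  · intro hW
    have hWm : window n m ∈ E := by rwa [window_congr hcast]
    by_cases hm : m + 2 ≤ c + n - 1
    · have hc1 : ((m+2 : ℤ) : ZMod n) = ((i+2 : ℤ) : ZMod n) := by
        push_cast; rw [hcast]
      have hS1 : (((i+2:ℤ) : ZMod n) ∈ S) ↔ T (m+2) := by
        rw [← hc1]; exact memS (m+2) (by omega) (by omega)
      rw [hiS, hS1]
      exact hW1 m h1 hm hWm
    · by_cases hm2' : m = c + n - 2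
      · have hc1 : ((c : ℤ) : ZMod n) = ((i+2 : ℤ) : ZMod n) := by
          apply castZ_of_dvd
          have hd : (n:ℤ) ∣ i - m := castZ_eq_iff.1 hcast
          have : (i + 2) - c = (i - m) + n := by rw [hm2']; ring
          rw [this]
          exact dvd_add hd ⟨1, by ring⟩
        have hS1 : (((i+2:ℤ) : ZMod n) ∈ S) ↔ T c := by
          rw [← hc1]; exact memS c (by omega) (by omega)
        rw [hiS, hS1, hm2']
        exact hW2 (by rwa [hm2'] at hWm)
      · have hm' : m = c + n - 1 := by omega
        have hc1 : ((c+1 : ℤ) : ZMod n) = ((i+2 : ℤ) : ZMod n) := by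
          apply castZ_of_dvd
          have hd : (n:ℤ) ∣ i - m := castZ_eq_iff.1 hcast
          have : (i + 2) - (c+1) = (i - m) + n := by rw [hm']; ring
          rw [this]
          exact dvd_add hd ⟨1, by ring⟩
        have hS1 : (((i+2:ℤ) : ZMod n) ∈ S) ↔ T (c+1) := by
          rw [← hc1]; exact memS (c+1) (by omega) (by omega)
        rw [hiS, hS1, hm']
        exact hW3 (by rwa [hm'] at hWm)

end AuxWCSC3
section AuxWCSC4

variable {n : ℕ} {E : Set (ZMod n × ZMod n)}

/-- every maximal arc of missing frames has odd length -/
lemma arc_odd (hn : 5 ≤ n) (hsub : E ⊆ sqCycleEdges n) (hconn : weaklyConnected E)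
    (hcl : IsClosedSub n E) (a b : ℤ) (hab : a ≤ b) (hbn : b ≤ a + n - 2)
    (hmiss : ∀ m, a ≤ m → m ≤ b → frame n m ∉ E)
    (hl : frame n (a-1) ∈ E) (hr : frame n (b+1) ∈ E) : 2 ∣ b - a := by
  by_contra hodd
  have hWa : window n (a-1) ∉ E := boundary_left hn hcl hl (hmiss a le_rfl hab)
  have hWb : window n b ∉ E := boundary_right hn hcl hr (hmiss b hab le_rfl)
  apply cutWindow hn hsub hconn (a-1) (fun m => a+1 ≤ m ∧ m ≤ b ∧ 2 ∣ (m - a - 1))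
    ?_ ?_ ?_ ?_ ?_ (a+1) ⟨by omega, by omega, by omega⟩ a ⟨by omega, by omega, by omega⟩
  · intro m h1 h2 hF
    have h3 : ¬(a ≤ m ∧ m ≤ b) := fun h => hmiss m h.1 h.2 hF
    omega
  · intro hF
    have h3 : ¬(a ≤ a-1+n-1 ∧ a-1+n-1 ≤ b) := fun h => hmiss _ h.1 h.2 hF
    omega
  · intro m h1 h2 hW
    have h3 : m ≠ a - 1 := fun h => hWa (h ▸ hW)
    have h4 : m ≠ b := fun h => hWb (h ▸ hW)
    omega
  · intro hW
    have h4 : a-1+n-2 ≠ b := fun h => hWb (h ▸ hW)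
    omega
  · intro hW
    have h4 : a-1+n-1 ≠ b := fun h => hWb (h ▸ hW)
    omega

/-- all interior windows of a maximal odd arc are present -/
lemma interior_window (hn : 5 ≤ n) (hsub : E ⊆ sqCycleEdges n) (hconn : weaklyConnected E)
    (hcl : IsClosedSub n E) (a b : ℤ) (hab : a ≤ b) (hbn : b ≤ a + n - 2)
    (hmiss : ∀ m, a ≤ m → m ≤ b → frame n m ∉ E)
    (hl : frame n (a-1) ∈ E) (hr : frame n (b+1) ∈ E)
    (hodd : 2 ∣ b - a) (x : ℤ) (hx1 : a ≤ x) (hx2 : x ≤ b - 1) : window n x ∈ E := by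
  by_contra hWx
  have hWa : window n (a-1) ∉ E := boundary_left hn hcl hl (hmiss a le_rfl hab)
  have hWb : window n b ∉ E := boundary_right hn hcl hr (hmiss b hab le_rfl)
  by_cases hpar : 2 ∣ (b - x)
  · apply cutWindow hn hsub hconn x (fun m => x+2 ≤ m ∧ m ≤ b ∧ 2 ∣ (m - x))
      ?_ ?_ ?_ ?_ ?_ (x+2) ⟨by omega, by omega, by omega⟩ x ⟨by omega, by omega, by omega⟩
    · intro m h1 h2 hF
      have h3 : ¬(a ≤ m ∧ m ≤ b) := fun h => hmiss m h.1 h.2 hF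
      omega
    · intro hF
      omega
    · intro m h1 h2 hW
      have h3 : m ≠ x := fun h => hWx (h ▸ hW)
      have h4 : m ≠ b := fun h => hWb (h ▸ hW)
      omega
    · intro hW
      have h4 : x+n-2 ≠ b := fun h => hWb (h ▸ hW)
      omega
    · intro hW
      omega
  · apply cutWindow hn hsub hconn (a-1) (fun m => a+1 ≤ m ∧ m ≤ x ∧ 2 ∣ (m - a - 1))
      ?_ ?_ ?_ ?_ ?_ (a+1) ⟨by omega, by omega, by omega⟩ a ⟨by omega, by omega, by omega⟩
    · intro m h1 h2 hF
      have h3 : ¬(a ≤ m ∧ m ≤ b) := fun h => hmiss m h.1 h.2 hF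
      omega
    · intro hF
      omega
    · intro m h1 h2 hW
      have h3 : m ≠ a-1 := fun h => hWa (h ▸ hW)
      have h4 : m ≠ x := fun h => hWx (h ▸ hW)
      omega
    · intro hW
      have h4 : a-1+n-2 ≠ x := fun h => hWx (h ▸ hW)
      omega
    · intro hW
      omega

end AuxWCSC4
section AuxWCSC5

variable {n : ℕ} {E : Set (ZMod n × ZMod n)}

/-- there is only one maximal arc of missing frames -/
lemma frames_arc (hn : 5 ≤ n) (hsub : E ⊆ sqCycleEdges n) (hconn : weaklyConnected E)
    (hcl : IsClosedSub n E) (a b : ℤ) (hab : a ≤ b) (hbn : b ≤ a + n - 2)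
    (hmiss : ∀ m, a ≤ m → m ≤ b → frame n m ∉ E)
    (hl : frame n (a-1) ∈ E) (hr : frame n (b+1) ∈ E)
    (hodd : 2 ∣ b - a) :
    ∀ i : ℤ, frame n i ∉ E → ∃ m, a ≤ m ∧ m ≤ b ∧ (m : ZMod n) = (i : ZMod n) := by
  classical
  have hn0 : 0 < n := by omega
  intro i hi
  by_contra hno
  push_neg at hno
  obtain ⟨m, hm1, hm2, hmc⟩ := exists_rep hn0 a i
  have hmE : frame n m ∉ E := fun h => hi (by rwa [frame_congr hmc] at h)
  have hmab : ¬(a ≤ m ∧ m ≤ b) := fun h => hno m h.1 h.2 hmc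
  have hmgt : b + 2 ≤ m := by
    rcases (by omega : b + 1 ≤ m) with h
    rcases eq_or_lt_of_le h with he | hlt
    · exact absurd (he ▸ hr) hmE
    · omega
  have hman : m ≤ a + n - 2 := by
    rcases (by omega : m ≤ a + n - 1) with h
    rcases eq_or_lt_of_le h with he | hlt
    · exfalso
      apply hmE
      rw [frame_congr (show ((m:ℤ) : ZMod n) = ((a - 1 : ℤ) : ZMod n) from
        castZ_of_dvd (by rw [he]; exact ⟨-1, by ring⟩))]
      exact hl
    · omega
  -- construct the next arc [a', b'] after b
  have hPex : ∃ t : ℕ, frame n (b + 2 + t) ∉ E := by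
    refine ⟨(m - b - 2).toNat, ?_⟩
    have : b + 2 + ((m - b - 2).toNat : ℤ) = m := by
      rw [Int.toNat_of_nonneg (by omega)]; ring
    rwa [this]
  set a' : ℤ := b + 2 + (Nat.find hPex : ℤ) with ha'
  have ha'E : frame n a' ∉ E := Nat.find_spec hPex
  have ha'min : ∀ u, b + 1 ≤ u → u < a' → frame n u ∈ E := by
    intro u h1 h2
    rcases eq_or_lt_of_le h1 with he | hlt
    · exact he ▸ hr
    · have h3 : (u - b - 2).toNat < Nat.find hPex := by
        have := Int.toNat_of_nonneg (show (0:ℤ) ≤ u - b - 2 by omega)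
        omega
      have h4 := Nat.find_min hPex h3
      simp only [not_not] at h4
      have h5 : b + 2 + ((u - b - 2).toNat : ℤ) = u := by
        rw [Int.toNat_of_nonneg (by omega)]; ring
      rwa [h5] at h4
  have ha'm : a' ≤ m := by
    have := Nat.find_min' hPex (p := fun t => frame n (b + 2 + (t:ℤ)) ∉ E)
      (m := (m - b - 2).toNat) (by
        show frame n (b + 2 + ((m - b - 2).toNat : ℤ)) ∉ E
        have h5 : b + 2 + ((m - b - 2).toNat : ℤ) = m := by
          rw [Int.toNat_of_nonneg (by omega)]; ring
        rwa [h5])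
    omega
  have hQex : ∃ t : ℕ, frame n (a' + 1 + t) ∈ E := by
    refine ⟨(a + n - 1 - a' - 1).toNat, ?_⟩
    have h5 : a' + 1 + ((a + n - 1 - a' - 1).toNat : ℤ) = a + n - 1 := by
      rw [Int.toNat_of_nonneg (by omega)]; ring
    rw [h5]
    rw [frame_congr (show ((a + n - 1 :ℤ) : ZMod n) = ((a - 1 : ℤ) : ZMod n) from
      castZ_of_dvd ⟨-1, by ring⟩)]
    exact hl
  set b' : ℤ := a' + (Nat.find hQex : ℤ) with hb'
  have hb'r : frame n (b' + 1) ∈ E := by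
    have := Nat.find_spec hQex
    have h5 : a' + 1 + (Nat.find hQex : ℤ) = b' + 1 := by rw [hb']; ring
    rwa [h5] at this
  have hb'miss : ∀ u, a' ≤ u → u ≤ b' → frame n u ∉ E := by
    intro u h1 h2
    rcases eq_or_lt_of_le h1 with he | hlt
    · exact he ▸ ha'E
    · have h3 : (u - a' - 1).toNat < Nat.find hQex := by
        have := Int.toNat_of_nonneg (show (0:ℤ) ≤ u - a' - 1 by omega)
        omega
      have h4 := Nat.find_min hQex h3
      have h5 : a' + 1 + ((u - a' - 1).toNat : ℤ) = u := by
        rw [Int.toNat_of_nonneg (by omega)]; ring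
      rwa [h5] at h4
  have hb'm : b' ≤ a + n - 2 := by
    have := Nat.find_min' hQex (m := (a + n - 1 - a' - 1).toNat) (by
      show frame n (a' + 1 + ((a + n - 1 - a' - 1).toNat : ℤ)) ∈ E
      have h5 : a' + 1 + ((a + n - 1 - a' - 1).toNat : ℤ) = a + n - 1 := by
        rw [Int.toNat_of_nonneg (by omega)]; ring
      rw [h5]
      rw [frame_congr (show ((a + n - 1 :ℤ) : ZMod n) = ((a - 1 : ℤ) : ZMod n) from
        castZ_of_dvd ⟨-1, by ring⟩)]
      exact hl)
    omega
  have ha'b' : a' ≤ b' := by omega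
  have ha'b : b + 2 ≤ a' := by omega
  have hl' : frame n (a' - 1) ∈ E := ha'min (a' - 1) (by omega) (by omega)
  have hodd' : 2 ∣ b' - a' :=
    arc_odd hn hsub hconn hcl a' b' ha'b' (by omega) hb'miss hl' hb'r
  have hWa : window n (a-1) ∉ E := boundary_left hn hcl hl (hmiss a le_rfl hab)
  have hWb : window n b ∉ E := boundary_right hn hcl hr (hmiss b hab le_rfl)
  have hWa' : window n (a'-1) ∉ E := boundary_left hn hcl hl' (hb'miss a' le_rfl ha'b')
  have hWb' : window n b' ∉ E := boundary_right hn hcl hb'r (hb'miss b' ha'b' le_rfl)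
  -- the two-arc cut
  apply cutWindow hn hsub hconn (a-1)
    (fun m => (a+1 ≤ m ∧ m ≤ b+1 ∧ 2 ∣ (m - a - 1)) ∨ (b+1 ≤ m ∧ m ≤ a'-1) ∨
      (a' ≤ m ∧ m ≤ b' ∧ 2 ∣ (m - a')))
    ?_ ?_ ?_ ?_ ?_ (b+1) ⟨by omega, by omega, by omega⟩ a ⟨by omega, by omega, by omega⟩
  · intro m h1 h2 hF
    have h3 : ¬(a ≤ m ∧ m ≤ b) := fun h => hmiss m h.1 h.2 hF
    have h4 : ¬(a' ≤ m ∧ m ≤ b') := fun h => hb'miss m h.1 h.2 hF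
    omega
  · intro hF
    have h4 : ¬(a' ≤ a-1+n-1 ∧ a-1+n-1 ≤ b') := fun h => hb'miss _ h.1 h.2 hF
    omega
  · intro m h1 h2 hW
    have h3 : m ≠ a-1 := fun h => hWa (h ▸ hW)
    have h4 : m ≠ b := fun h => hWb (h ▸ hW)
    have h5 : m ≠ a'-1 := fun h => hWa' (h ▸ hW)
    have h6 : m ≠ b' := fun h => hWb' (h ▸ hW)
    omega
  · intro hW
    have h5 : a-1+n-2 ≠ a'-1 := fun h => hWa' (h ▸ hW)
    have h6 : a-1+n-2 ≠ b' := fun h => hWb' (h ▸ hW)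
    omega
  · intro hW
    have h6 : a-1+n-1 ≠ b' := fun h => hWb' (h ▸ hW)
    omega

end AuxWCSC5
section AuxWCSC6

variable {n : ℕ} {E : Set (ZMod n × ZMod n)}

lemma even_disconnected (hn : 5 ≤ n) (hsub : E ⊆ sqCycleEdges n) (hconn : weaklyConnected E)
    (hnone : ∀ i : ℤ, frame n i ∉ E) (heven : 2 ∣ n) : False := by
  apply noCross hsub hconn {x : ZMod n | ZMod.castHom heven (ZMod 2) x = 0}
    (u := (0 : ZMod n)) (v := (1 : ZMod n))
  · intro i
    constructor
    · intro hF; exact absurd hF (hnone i)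
    · intro _
      have h1 : (ZMod.castHom heven (ZMod 2)) ((i : ℤ) : ZMod n) = ((i : ℤ) : ZMod 2) :=
        map_intCast _ _
      have h2 : (ZMod.castHom heven (ZMod 2)) (((i+2) : ℤ) : ZMod n) = (((i+2) : ℤ) : ZMod 2) :=
        map_intCast _ _
      have h3 : (((i+2) : ℤ) : ZMod 2) = ((i : ℤ) : ZMod 2) := by
        push_cast
        have : (2 : ZMod 2) = 0 := by decide
        rw [this, add_zero]
      simp only [Set.mem_setOf_eq, h1, h2, h3]
  · simp only [Set.mem_setOf_eq, map_zero]
  · simp only [Set.mem_setOf_eq, map_one]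
    decide

lemma odd_two_windows (hn : 5 ≤ n) (hsub : E ⊆ sqCycleEdges n) (hconn : weaklyConnected E)
    (hnone : ∀ i : ℤ, frame n i ∉ E) (hodd : ¬ (2:ℤ) ∣ (n:ℤ)) {s t : ℤ}
    (hs : window n s ∉ E) (ht : window n t ∉ E) (hst : (t : ZMod n) ≠ (s : ZMod n)) : False := by
  have hn0 : 0 < n := by omega
  obtain ⟨t', h1', h2', hc'⟩ := exists_rep hn0 (s+1) t
  have ht'ne : t' ≠ s + n := by
    intro h
    apply hst
    rw [← hc', h]
    exact castZ_of_dvd ⟨-1, by ring⟩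
  set t'' : ℤ := if 2 ∣ t' - s then t' else t' + n with ht''
  have hct'' : ((t'' : ℤ) : ZMod n) = (t : ZMod n) := by
    rw [ht'']
    split
    · exact hc'
    · rw [← hc']
      exact castZ_of_dvd ⟨-1, by ring⟩
  have hpart'' : 2 ∣ t'' - s := by
    rw [ht'']
    split
    · assumption
    · omega
  have hbt'' : s + 1 ≤ t'' ∧ t'' ≤ s + 2*n - 1 := by rw [ht'']; split <;> omega
  obtain ⟨mm, hmm⟩ := hpart''
  have hmm1 : 1 ≤ mm ∧ mm ≤ 2*(n:ℤ) - 1 := by omega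
  apply noCross hsub hconn
    {x : ZMod n | ∃ v : ℤ, 1 ≤ v ∧ v ≤ mm ∧ ((s + 2*v : ℤ) : ZMod n) = x}
    (u := ((s + 2 : ℤ) : ZMod n)) (v := ((s : ℤ) : ZMod n))
  · intro i
    constructor
    · intro hF; exact absurd hF (hnone i)
    · intro hWi
      constructor
      · rintro ⟨v, hv1, hv2, hv⟩
        rcases eq_or_lt_of_le hv2 with he | hlt
        · exfalso
          apply ht
          have hti : ((t:ℤ) : ZMod n) = ((i:ℤ) : ZMod n) := by
            rw [← hct'', ← hv, he]
            exact castZ_of_dvd ⟨0, by omega⟩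
          rw [window_congr hti]
          exact hWi
        · refine ⟨v+1, by omega, by omega, ?_⟩
          have hd := castZ_eq_iff.1 hv
          apply castZ_of_dvd
          have h7 : (i + 2) - (s + 2*(v+1)) = i - (s + 2*v) := by ring
          rw [h7]
          exact hd
      · rintro ⟨v, hv1, hv2, hv⟩
        rcases eq_or_lt_of_le hv1 with he | hlt
        · exfalso
          apply hs
          have hd := castZ_eq_iff.1 hv
          have hsi : ((s:ℤ) : ZMod n) = ((i:ℤ) : ZMod n) := by
            apply castZ_of_dvd
            have h7 : i - s = (i + 2) - (s + 2*v) := by rw [← he]; ring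
            rw [h7]; exact hd
          rw [window_congr hsi]
          exact hWi
        · refine ⟨v - 1, by omega, by omega, ?_⟩
          have hd := castZ_eq_iff.1 hv
          apply castZ_of_dvd
          have h7 : i - (s + 2*(v-1)) = (i+2) - (s + 2*v) := by ring
          rw [h7]
          exact hd
  · exact ⟨1, le_rfl, by omega, by norm_num⟩
  · rintro ⟨v, hv1, hv2, hv⟩
    have hd := castZ_eq_iff.1 hv
    have h7 : s - (s + 2*v) = -(2*v) := by ring
    rw [h7] at hd
    have hd2 : (n:ℤ) ∣ 2*v := (dvd_neg).mp hd
    have hd3 : (n:ℤ) ∣ v := odd_dvd_two_mul hodd hd2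
    have := Int.le_of_dvd (by omega) hd3
    omega

end AuxWCSC6
section AuxWCSC7

variable {n : ℕ} {E : Set (ZMod n × ZMod n)}

lemma caseB (hn : 5 ≤ n) (hsub : E ⊆ sqCycleEdges n) (hconn : weaklyConnected E)
    (hnone : ∀ i : ℤ, frame n i ∉ E) (hne2 : E ≠ windowsSet n) :
    ∃ j k : ℕ, j ≤ n - 1 ∧ k ≤ (n - 1) / 2 ∧ E = stripTailEdges n (k : ℤ) (j : ℤ) := by
  have hn0 : 0 < n := by omega
  have hoddn : ¬ (2:ℤ) ∣ (n:ℤ) := by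
    intro h
    exact even_disconnected hn hsub hconn hnone (by exact_mod_cast h)
  have hnodd : ¬ 2 ∣ n := fun h => hoddn (by exact_mod_cast h)
  by_cases hwall : ∀ i : ℤ, window n i ∈ E
  · exfalso
    apply hne2
    apply Set.Subset.antisymm
    · intro p hp
      obtain ⟨i, hp' | hp'⟩ := hsub hp
      · exact absurd (hp' ▸ hp) (hnone i)
      · exact ⟨i, hp'⟩
    · rintro p ⟨i, rfl⟩
      exact hwall i
  push_neg at hwall
  obtain ⟨s, hs⟩ := hwall
  have huniq : ∀ t : ℤ, window n t ∉ E → (t : ZMod n) = (s : ZMod n) := by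
    intro t ht
    by_contra hts
    exact odd_two_windows hn hsub hconn hnone hoddn hs ht hts
  refine ⟨((s+2) % n).toNat, (n-1)/2, ?_, le_rfl, ?_⟩
  · have h1 := Int.emod_lt_of_pos (s+2) (show (0:ℤ) < n by omega)
    have h2 := Int.emod_nonneg (s+2) (show (n:ℤ) ≠ 0 by omega)
    omega
  · set J : ℤ := ((((s+2) % n).toNat : ℕ) : ℤ) with hJ
    set K : ℤ := ((((n-1)/2 : ℕ)) : ℤ) with hK
    have hj : (J : ZMod n) = ((s+2 : ℤ) : ZMod n) := by
      rw [hJ, Int.toNat_of_nonneg (Int.emod_nonneg _ (show (n:ℤ) ≠ 0 by omega))]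
      apply castZ_of_dvd
      exact Int.dvd_self_sub_of_emod_eq rfl
    have hdj : (n:ℤ) ∣ (s+2) - J := castZ_eq_iff.1 hj
    have h2k : 2 * K = (n:ℤ) - 1 := by
      rw [hK]; omega
    ext p
    simp only [stripTailEdges, Set.mem_diff]
    constructor
    · intro hp
      refine ⟨hsub hp, ?_⟩
      intro hesc
      simp only [escapeRoute, Set.mem_union, Set.mem_insert_iff, Set.mem_singleton_iff,
        Set.mem_setOf_eq] at hesc
      rcases hesc with (h | h) | ⟨i, hi1, hi2, h⟩
      · apply hs
        have hc : ((J - 2 : ℤ) : ZMod n) = ((s:ℤ) : ZMod n) := by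
          apply castZ_of_dvd
          have h7 : s - (J - 2) = (s+2) - J := by ring
          rw [h7]
          exact hdj
        rw [← window_congr hc, ← h]
        exact hp
      · apply hs
        have hc : ((J + 2*K - 1 : ℤ) : ZMod n) = ((s:ℤ) : ZMod n) := by
          apply castZ_of_dvd
          obtain ⟨q, hq⟩ := hdj
          refine ⟨q - 1, ?_⟩
          have h7 : s - (J + 2*K - 1) = ((s+2) - J) - (2*K) - 1 := by ring
          rw [h7, h2k, hq]
          ring
        rw [← window_congr hc, ← h]
        exact hp
      · exact hnone i (h ▸ hp)
    · rintro ⟨hpc, hpe⟩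
      obtain ⟨i, hp' | hp'⟩ := hpc
      · exfalso
        apply hpe
        simp only [escapeRoute, Set.mem_union, Set.mem_insert_iff, Set.mem_singleton_iff,
          Set.mem_setOf_eq]
        obtain ⟨m, hm1, hm2, hmc⟩ := exists_rep hn0 (J-1) i
        refine Or.inr ⟨m, hm1, by omega, ?_⟩
        rw [hp']
        exact (frame_congr hmc).symm
      · by_cases hsi : (i : ZMod n) = (s : ZMod n)
        · exfalso
          apply hpe
          simp only [escapeRoute, Set.mem_union, Set.mem_insert_iff, Set.mem_singleton_iff,
            Set.mem_setOf_eq]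
          refine Or.inl (Or.inl ?_)
          rw [hp']
          apply window_congr
          rw [hsi]
          apply castZ_of_dvd
          have h7 : (J - 2) - s = -((s+2) - J) := by ring
          rw [h7]
          exact dvd_neg.mpr hdj
        · have hw : window n i ∈ E := by
            by_contra hw
            exact hsi (huniq i hw)
          rw [hp']
          exact hw

end AuxWCSC7
section AuxWCSC8

variable {n : ℕ} {E : Set (ZMod n × ZMod n)}

lemma caseMain (hn : 5 ≤ n) (hsub : E ⊆ sqCycleEdges n) (hconn : weaklyConnected E)
    (hcl : IsClosedSub n E) {x0 x1 : ℤ} (hx0 : frame n x0 ∉ E) (hx1 : frame n x1 ∈ E) :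
    ∃ j k : ℕ, j ≤ n - 1 ∧ k ≤ (n - 1) / 2 ∧ E = stripTailEdges n (k : ℤ) (j : ℤ) := by
  classical
  have hn0 : 0 < n := by omega
  -- construct the maximal arc [a, b] of missing frames around x0
  have hD : ∃ t : ℕ, frame n (x0 - t - 1) ∈ E := by
    obtain ⟨m, hm1, hm2, hmc⟩ := exists_rep hn0 (x0 - n) x1
    refine ⟨(x0 - 1 - m).toNat, ?_⟩
    have h5 : x0 - ((x0 - 1 - m).toNat : ℤ) - 1 = m := by
      rw [Int.toNat_of_nonneg (by omega)]; ring
    rw [h5, frame_congr hmc]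
    exact hx1
  have hU : ∃ t : ℕ, frame n (x0 + t + 1) ∈ E := by
    obtain ⟨m, hm1, hm2, hmc⟩ := exists_rep hn0 (x0 + 1) x1
    refine ⟨(m - x0 - 1).toNat, ?_⟩
    have h5 : x0 + ((m - x0 - 1).toNat : ℤ) + 1 = m := by
      rw [Int.toNat_of_nonneg (by omega)]; ring
    rw [h5, frame_congr hmc]
    exact hx1
  set a : ℤ := x0 - (Nat.find hD : ℤ) with ha
  set b : ℤ := x0 + (Nat.find hU : ℤ) with hb
  have hab : a ≤ b := by omega
  have hlA : frame n (a - 1) ∈ E := by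
    have := Nat.find_spec hD
    have h5 : x0 - (Nat.find hD : ℤ) - 1 = a - 1 := by rw [ha]
    rwa [h5] at this
  have hrB : frame n (b + 1) ∈ E := by
    have := Nat.find_spec hU
    have h5 : x0 + (Nat.find hU : ℤ) + 1 = b + 1 := by rw [hb]
    rwa [h5] at this
  have hmiss : ∀ m, a ≤ m → m ≤ b → frame n m ∉ E := by
    intro m h1 h2
    rcases le_or_gt m x0 with hc | hc
    · rcases eq_or_lt_of_le hc with he | hlt
      · exact he ▸ hx0
      · have h3 : (x0 - m - 1).toNat < Nat.find hD := by
          have := Int.toNat_of_nonneg (show (0:ℤ) ≤ x0 - m - 1 by omega)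
          omega
        have h4 := Nat.find_min hD h3
        have h5 : x0 - ((x0 - m - 1).toNat : ℤ) - 1 = m := by
          rw [Int.toNat_of_nonneg (by omega)]; ring
        rwa [h5] at h4
    · have h3 : (m - x0 - 1).toNat < Nat.find hU := by
        have := Int.toNat_of_nonneg (show (0:ℤ) ≤ m - x0 - 1 by omega)
        omega
      have h4 := Nat.find_min hU h3
      have h5 : x0 + ((m - x0 - 1).toNat : ℤ) + 1 = m := by
        rw [Int.toNat_of_nonneg (by omega)]; ring
      rwa [h5] at h4
  have hbn : b ≤ a + n - 2 := by
    by_contra hc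
    apply hmiss (a + n - 1) (by omega) (by omega)
    rw [frame_congr (show ((a + n - 1 : ℤ) : ZMod n) = ((a - 1 : ℤ) : ZMod n) from
      castZ_of_dvd ⟨-1, by ring⟩)]
    exact hlA
  have hodd : 2 ∣ b - a := arc_odd hn hsub hconn hcl a b hab hbn hmiss hlA hrB
  have hsingle := frames_arc hn hsub hconn hcl a b hab hbn hmiss hlA hrB hodd
  have hintw := interior_window hn hsub hconn hcl a b hab hbn hmiss hlA hrB hodd
  have hWa : window n (a-1) ∉ E := boundary_left hn hcl hlA (hmiss a le_rfl hab)
  have hWb : window n b ∉ E := boundary_right hn hcl hrB (hmiss b hab le_rfl)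
  refine ⟨((a+1) % n).toNat, ((b - a)/2).toNat, ?_, ?_, ?_⟩
  · have h1 := Int.emod_lt_of_pos (a+1) (show (0:ℤ) < n by omega)
    have h2 := Int.emod_nonneg (a+1) (show (n:ℤ) ≠ 0 by omega)
    omega
  · omega
  · set J : ℤ := ((((a+1) % n).toNat : ℕ) : ℤ) with hJ
    set K : ℤ := (((b - a)/2).toNat : ℤ) with hK
    have h2k : 2 * K = b - a := by
      rw [hK, Int.toNat_of_nonneg (by omega)]
      omega
    have hj : (J : ZMod n) = ((a+1 : ℤ) : ZMod n) := by
      rw [hJ, Int.toNat_of_nonneg (Int.emod_nonneg _ (show (n:ℤ) ≠ 0 by omega))]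
      apply castZ_of_dvd
      exact Int.dvd_self_sub_of_emod_eq rfl
    have hdj : (n:ℤ) ∣ (a+1) - J := castZ_eq_iff.1 hj
    obtain ⟨q, hq⟩ := hdj
    have hnq : (n:ℤ) * -q = -((n:ℤ) * q) := by ring
    clear_value J K
    clear hJ hK
    ext p
    simp only [stripTailEdges, Set.mem_diff]
    constructor
    · intro hp
      refine ⟨hsub hp, ?_⟩
      intro hesc
      simp only [escapeRoute, Set.mem_union, Set.mem_insert_iff, Set.mem_singleton_iff,
        Set.mem_setOf_eq] at hesc
      rcases hesc with (h | h) | ⟨i, hi1, hi2, h⟩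
      · apply hWa
        have hc : ((J - 2 : ℤ) : ZMod n) = ((a - 1:ℤ) : ZMod n) := by
          apply castZ_of_dvd
          refine ⟨q, ?_⟩
          have h7 : (a - 1) - (J - 2) = (a+1) - J := by ring
          rw [h7, hq]
        rw [← window_congr hc, ← h]
        exact hp
      · apply hWb
        have hc : ((J + 2*K - 1 : ℤ) : ZMod n) = ((b:ℤ) : ZMod n) := by
          apply castZ_of_dvd
          refine ⟨q, ?_⟩
          have h7 : b - (J + 2*K - 1) = ((a+1) - J) + (b - a) - (2*K) := by ring
          rw [h7, h2k, hq]
          ring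
        rw [← window_congr hc, ← h]
        exact hp
      · -- p = frame n i with J-1 ≤ i ≤ J+2K-1
        have hc : ((i : ℤ) : ZMod n) = ((i + n*q : ℤ) : ZMod n) := by
          apply castZ_of_dvd
          exact ⟨q, by ring⟩
        apply hmiss (i + n*q) (by omega) (by omega)
        rw [← frame_congr hc, ← h]
        exact hp
    · rintro ⟨hpc, hpe⟩
      obtain ⟨i, hp' | hp'⟩ := hpc
      · have hfi : frame n i ∈ E := by
          by_contra hfi
          obtain ⟨m, hm1, hm2, hmc⟩ := hsingle i hfi
          apply hpe
          simp only [escapeRoute, Set.mem_union, Set.mem_insert_iff, Set.mem_singleton_iff,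
            Set.mem_setOf_eq]
          refine Or.inr ⟨m - n*q, by omega, by omega, ?_⟩
          rw [hp']
          have hc : ((m - n*q : ℤ) : ZMod n) = ((i : ℤ) : ZMod n) := by
            rw [← hmc]
            exact castZ_of_dvd ⟨q, by ring⟩
          
          exact (frame_congr hc).symm
        rw [hp']
        exact hfi
      · obtain ⟨m, hm1, hm2, hmc⟩ := exists_rep hn0 (a-1) i
        rcases eq_or_lt_of_le hm1 with he1 | hlt1
        · -- m = a - 1 : p is the first escape window
          exfalso
          apply hpe
          simp only [escapeRoute, Set.mem_union, Set.mem_insert_iff, Set.mem_singleton_iff,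
            Set.mem_setOf_eq]
          refine Or.inl (Or.inl ?_)
          rw [hp']
          apply window_congr
          rw [← hmc, ← he1]
          exact castZ_of_dvd ⟨-q, by omega⟩
        rcases lt_trichotomy m b with hmb | hmb | hmb
        · -- interior window
          have hw : window n m ∈ E := hintw m (by omega) (by omega)
          rw [hp', ← window_congr hmc]
          exact hw
        · -- m = b : second escape window
          exfalso
          apply hpe
          simp only [escapeRoute, Set.mem_union, Set.mem_insert_iff, Set.mem_singleton_iff,
            Set.mem_setOf_eq]
          refine Or.inl (Or.inr ?_)
          rw [hp']
          apply window_congr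
          rw [← hmc, hmb]
          apply castZ_of_dvd
          exact ⟨-q, by omega⟩
        · -- m ≥ b+1 : both frames present, window forced
          have hfm : frame n m ∈ E := by
            by_contra hfm
            obtain ⟨m', h1', h2', hc'⟩ := hsingle m hfm
            have : m' - m = 0 := dvd_small (castZ_eq_iff.1 hc'.symm)
              (by omega) (by omega)
            omega
          have hfm1 : frame n (m+1) ∈ E := by
            by_contra hfm
            obtain ⟨m', h1', h2', hc'⟩ := hsingle (m+1) hfm
            have : m' - (m+1) = 0 := dvd_small (castZ_eq_iff.1 hc'.symm)
              (by omega) (by omega)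
            omega
          have hw : window n m ∈ E := closure_w hn hcl hfm hfm1
          rw [hp', ← window_congr hmc]
          exact hw

end AuxWCSC8
theorem wcsc_classification (n : ℕ) (hn : 5 ≤ n) (E : Set (ZMod n × ZMod n))
    (hE : IsWCSC n E) (hnt : NontrivialSub n E) :
    ∃ j k : ℕ, j ≤ n - 1 ∧ k ≤ (n - 1) / 2 ∧ E = stripTailEdges n (k : ℤ) (j : ℤ) := by
  obtain ⟨hsub, hconn, hcl⟩ := hE
  by_cases hall : ∀ i : ℤ, frame n i ∈ E
  · exfalso
    apply hnt.1
    apply Set.Subset.antisymm hsub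
    rintro p ⟨i, hp | hp⟩
    · rw [hp]; exact hall i
    · rw [hp]; exact closure_w hn hcl (hall i) (hall (i+1))
  · push_neg at hall
    obtain ⟨x0, hx0⟩ := hall
    by_cases hnone : ∀ i : ℤ, frame n i ∉ E
    · exact caseB hn hsub hconn hnone hnt.2
    · push_neg at hnone
      obtain ⟨x1, hx1⟩ := hnone
      exact caseMain hn hsub hconn hcl hx0 hx1
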